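/- arXiv:2407.17963 — 5 statements merged into one kernel-verified Lean document; each statement's English description precedes it below -/
import Mathlib

section
/- Let p ≥ 1 and n ≥ 1 be natural numbers, let g = gcd(p, 10^n) and p' = p / g. Let a = A·10^n + a₀ and b = B·10^n + b₀ with a₀ < 10^n and b₀ < 10^n. Then (a + b) ≡ (a₀ + b₀) (mod p) if and only if p' divides A + B. -/
/-- With `g = gcd(p, 10^n)`, `p' = p / g`, and operands split into high and low parts
`a = A·10^n + a₀`, `b = B·10^n + b₀` (`a₀, b₀ < 10^n`), the truncated modular addition is
correct, i.e. `(a + b) ≡ a₀ + b₀ (mod p)`, iff `p'` divides `A + B`. -/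
theorem truncated_modular_addition_correct_iff (p n : ℕ) (hp : 1 ≤ p) (hn : 1 ≤ n)
    (A B a₀ b₀ : ℕ) (ha₀ : a₀ < 10 ^ n) (hb₀ : b₀ < 10 ^ n) :
    ((A * 10 ^ n + a₀) + (B * 10 ^ n + b₀)) % p = (a₀ + b₀) % p ↔
      p / Nat.gcd p (10 ^ n) ∣ A + B := by
  set g := Nat.gcd p (10 ^ n) with hg
  have hg0 : 0 < g := Nat.gcd_pos_of_pos_left _ hp
  have hgp : g ∣ p := Nat.gcd_dvd_left _ _
  have hgm : g ∣ 10 ^ n := Nat.gcd_dvd_right _ _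
  obtain ⟨p', hp'⟩ := hgp
  obtain ⟨m, hm⟩ := hgm
  have hcop : Nat.Coprime p' m := by
    have := Nat.coprime_div_gcd_div_gcd (m := p) (n := 10 ^ n) hg0
    rwa [← hg, hp', hm, Nat.mul_div_cancel_left _ hg0, Nat.mul_div_cancel_left _ hg0] at this
  have hpq : p / g = p' := by rw [hp', Nat.mul_div_cancel_left _ hg0]
  rw [hpq]
  have e : (A * 10 ^ n + a₀) + (B * 10 ^ n + b₀) = (A + B) * 10 ^ n + (a₀ + b₀) := by ring
  have key : ((A * 10 ^ n + a₀) + (B * 10 ^ n + b₀)) % p = (a₀ + b₀) % p ↔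
      p ∣ (A + B) * 10 ^ n := by
    rw [e]
    constructor
    · intro h
      have := (Nat.modEq_iff_dvd' (Nat.le_add_left _ _)).mp h.symm
      simpa using this
    · intro h
      obtain ⟨c, hc⟩ := h
      rw [hc, Nat.add_comm, Nat.add_mul_mod_self_left]
  rw [key, hp', hm]
  constructor
  · rintro ⟨c, hc⟩
    have h2 : (A + B) * m = p' * c := by
      apply Nat.eq_of_mul_eq_mul_left hg0
      calc g * ((A + B) * m) = (A + B) * (g * m) := by ring
        _ = g * p' * c := hc
        _ = g * (p' * c) := by ring
    exact hcop.dvd_of_dvd_mul_right ⟨c, h2⟩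
  · rintro ⟨c, hc⟩
    exact ⟨c * m, by rw [hc]; ring⟩
end

section
/- Fix natural numbers p ≥ 1 and n ≥ 1, and let g = gcd(p, 10^n). For each m > n, let F(m) be the fraction of pairs (a, b) with 10^{m-1} ≤ a < 10^m and 10^{m-1} ≤ b < 10^m that satisfy (a + b) ≡ (a mod 10^n) + (b mod 10^n) (mod p). Then F(m) converges to g/p as m → ∞. -/
open Filter

/-- The set of pairs `(a, b)` of numbers with exactly `m` decimal digits. -/
def mDigitPairs (m : ℕ) : Finset (ℕ × ℕ) :=
  Finset.Ico (10 ^ (m - 1)) (10 ^ m) ×ˢ Finset.Ico (10 ^ (m - 1)) (10 ^ m)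

/-- Counting pairs in a product by summing fiberwise. -/
lemma aux_card_filter_product {α β : Type*} (S : Finset α) (T : Finset β)
    (P : α × β → Prop) [DecidablePred P] :
    ((S ×ˢ T).filter P).card = ∑ a ∈ S, (T.filter fun b => P (a, b)).card := by
  rw [Finset.card_filter, Finset.sum_product]
  exact Finset.sum_congr rfl fun a _ => (Finset.card_filter _ _).symm

/-- Counting elements of `[K*A, K*B)` by the value of their quotient by `K`. -/
lemma aux_card_div (K A B : ℕ) (hK : 0 < K) (Q : ℕ → Prop) [DecidablePred Q] :
    ((Finset.Ico (K * A) (K * B)).filter fun b => Q (b / K)).card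
      = K * ((Finset.Ico A B).filter Q).card := by
  have hset : (Finset.Ico (K * A) (K * B)).filter (fun b => Q (b / K))
      = ((Finset.Ico A B).filter Q).biUnion (fun u => Finset.Ico (K * u) (K * u + K)) := by
    ext b
    simp only [Finset.mem_filter, Finset.mem_Ico, Finset.mem_biUnion]
    constructor
    · rintro ⟨⟨h1, h2⟩, hQ⟩
      have hd1 : A ≤ b / K := (Nat.le_div_iff_mul_le hK).mpr (by rw [mul_comm]; exact h1)
      have hd2 : b / K < B := (Nat.div_lt_iff_lt_mul hK).mpr (by rw [mul_comm]; exact h2)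
      have hdm := Nat.div_add_mod b K
      have hlt := Nat.mod_lt b hK
      exact ⟨b / K, ⟨⟨hd1, hd2⟩, hQ⟩, by omega, by omega⟩
    · rintro ⟨u, hu, h1, h2⟩
      obtain ⟨⟨hA, hB⟩, hQ⟩ : (A ≤ u ∧ u < B) ∧ Q u := by
        simpa [Finset.mem_filter, Finset.mem_Ico] using hu
      have hb : b / K = u := Nat.div_eq_of_lt_le (by rw [mul_comm]; exact h1)
        (by rw [add_mul, one_mul, mul_comm]; exact h2)
      have hA' : K * A ≤ K * u := Nat.mul_le_mul_left K hA
      have hB' : K * (u + 1) ≤ K * B := Nat.mul_le_mul_left K hB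
      rw [Nat.mul_add, Nat.mul_one] at hB'
      exact ⟨⟨by omega, by omega⟩, hb ▸ hQ⟩
  have hdisj : ∀ u ∈ (Finset.Ico A B).filter Q, ∀ v ∈ (Finset.Ico A B).filter Q, u ≠ v →
      Disjoint (Finset.Ico (K * u) (K * u + K)) (Finset.Ico (K * v) (K * v + K)) := by
    intro u hu v hv huv
    simp only [Finset.disjoint_left, Finset.mem_Ico]
    rintro x ⟨hx1, hx2⟩ ⟨hx3, hx4⟩
    rcases Nat.lt_or_ge u v with h | h
    · have := Nat.mul_le_mul_left K (show u + 1 ≤ v by omega)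
      rw [Nat.mul_add, Nat.mul_one] at this; omega
    · have hvu : v < u := lt_of_le_of_ne h (Ne.symm huv)
      have := Nat.mul_le_mul_left K (show v + 1 ≤ u by omega)
      rw [Nat.mul_add, Nat.mul_one] at this; omega
  rw [hset, Finset.card_biUnion hdisj]
  have hcards : ∀ u ∈ (Finset.Ico A B).filter Q, (Finset.Ico (K * u) (K * u + K)).card = K :=
    fun u _ => by rw [Nat.card_Ico]; omega
  rw [Finset.sum_congr rfl hcards, Finset.sum_const, smul_eq_mul, mul_comm]

/-- The predicate `(c + u) % q = 0` is a congruence condition on `u`. -/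
lemma aux_pred_modEq (q c : ℕ) (hq : 0 < q) (u : ℕ) :
    (c + u) % q = 0 ↔ u ≡ (q - c % q) [MOD q] := by
  have h2 : c % q ≤ c := Nat.mod_le _ _
  have h3 : c % q < q := Nat.mod_lt _ hq
  have h5 : q ∣ (c - c % q) := Nat.dvd_sub_mod c
  have h1 : (c + (q - c % q)) % q = 0 := by
    have h4 : c + (q - c % q) = (c - c % q) + q := by omega
    rw [h4, Nat.add_mod_right]
    exact Nat.mod_eq_zero_of_dvd h5
  constructor
  · intro h
    exact Nat.ModEq.add_left_cancel' c
      (show (c + u) % q = (c + (q - c % q)) % q by rw [h, h1])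
  · intro h
    have h6 : (c + u) % q = (c + (q - c % q)) % q := Nat.ModEq.add_left c h
    rw [h6, h1]

/-- Counting the number of solutions of a congruence in `[L, 10L)`: between `9L/q - 1`
and `9L/q + 1`, expressed as inequalities in `ℕ`. -/
lemma aux_count_bounds (q L c : ℕ) (hq : 0 < q) (hL : 0 < L) :
    9 * L ≤ q * ((Finset.Ico L (10 * L)).filter fun u => (c + u) % q = 0).card + q ∧
    q * ((Finset.Ico L (10 * L)).filter fun u => (c + u) % q = 0).card ≤ 9 * L + q := by
  have hfc : (Finset.Ico L (10 * L)).filter (fun u => (c + u) % q = 0)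
      = (Finset.Ico L (10 * L)).filter (fun u => u ≡ (q - c % q) [MOD q]) :=
    Finset.filter_congr fun u _ => aux_pred_modEq q c hq u
  set v := q - c % q with hv
  set C := ((Finset.Ico L (10 * L)).filter fun u => (c + u) % q = 0).card with hC
  have hcard : (C : ℤ) = max (⌈(((10 * L : ℕ) : ℚ) - (v : ℚ)) / (q : ℚ)⌉
      - ⌈(((L : ℕ) : ℚ) - (v : ℚ)) / (q : ℚ)⌉) 0 := by
    rw [hC, hfc]; exact Nat.Ico_filter_modEq_card L (10 * L) hq v
  have hq' : (0 : ℚ) < (q : ℚ) := by exact_mod_cast hq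
  set x : ℚ := (((10 * L : ℕ) : ℚ) - (v : ℚ)) / (q : ℚ) with hx
  set y : ℚ := (((L : ℕ) : ℚ) - (v : ℚ)) / (q : ℚ) with hy
  have hxy : x - y = 9 * (L : ℚ) / q := by
    rw [hx, hy, div_sub_div_same]; push_cast; ring_nf
  have hc1 : (x : ℚ) ≤ ⌈x⌉ := Int.le_ceil x
  have hc2 : ((⌈x⌉ : ℤ) : ℚ) < x + 1 := Int.ceil_lt_add_one x
  have hc3 : (y : ℚ) ≤ ⌈y⌉ := Int.le_ceil y
  have hc4 : ((⌈y⌉ : ℤ) : ℚ) < y + 1 := Int.ceil_lt_add_one y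
  have hCQ : (C : ℚ) = max (((⌈x⌉ - ⌈y⌉ : ℤ) : ℚ)) 0 := by
    have := hcard
    have h7 : ((C : ℤ) : ℚ) = (((max (⌈x⌉ - ⌈y⌉) 0 : ℤ)) : ℚ) := by exact_mod_cast this
    rw [show ((C : ℚ)) = (((C : ℤ) : ℚ)) by push_cast; ring, h7]
    push_cast [Int.cast_max]; ring_nf
  have hub : (C : ℚ) ≤ 9 * (L : ℚ) / q + 1 := by
    rw [hCQ]
    apply max_le
    · push_cast; linarith [hxy]
    · positivity
  have hlb : 9 * (L : ℚ) / q - 1 ≤ (C : ℚ) := by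
    rw [hCQ]
    refine le_trans ?_ (le_max_left _ _)
    push_cast; linarith [hxy]
  constructor
  · have h8 : 9 * (L : ℚ) ≤ q * C + q := by
      have h9 := mul_le_mul_of_nonneg_left hlb (le_of_lt hq')
      rw [mul_sub, mul_div_cancel₀ _ (ne_of_gt hq'), mul_one] at h9
      linarith
    exact_mod_cast h8
  · have h8 : (q : ℚ) * C ≤ 9 * L + q := by
      have h9 := mul_le_mul_of_nonneg_left hub (le_of_lt hq')
      rw [mul_add, mul_div_cancel₀ _ (ne_of_gt hq'), mul_one] at h9
      linarith
    exact_mod_cast h8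

/-- The fraction of pairs `(a, b)` of numbers with exactly `m` decimal digits on which the
truncated modular addition `((a mod 10^n) + (b mod 10^n)) mod p` agrees with the true
`(a + b) mod p` converges to `gcd(p, 10^n) / p` as `m → ∞`. -/
theorem ood_accuracy_modular_addition_tendsto (p n : ℕ) (hp : 1 ≤ p) (hn : 1 ≤ n) :
    Tendsto
      (fun m : ℕ =>
        ((((mDigitPairs m).filter fun ab =>
            (ab.1 + ab.2) % p = (ab.1 % 10 ^ n + ab.2 % 10 ^ n) % p).card : ℝ) /
          ((mDigitPairs m).card : ℝ)))
      atTop (nhds ((Nat.gcd p (10 ^ n) : ℝ) / (p : ℝ))) := by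
  set K := 10 ^ n with hK
  have hKpos : 0 < K := Nat.pow_pos (by norm_num)
  set g := Nat.gcd p K with hg
  have hgpos : 0 < g := Nat.gcd_pos_of_pos_left K hp
  have hgdvd : g ∣ p := Nat.gcd_dvd_left p K
  set q := p / g with hq
  have hqpos : 0 < q := Nat.div_pos (Nat.le_of_dvd hp hgdvd) hgpos
  have hgq : g * q = p := Nat.mul_div_cancel' hgdvd
  have hpR : ((p : ℝ)) ≠ 0 := Nat.cast_ne_zero.mpr (by omega)
  have hqR0 : ((q : ℝ)) ≠ 0 := Nat.cast_ne_zero.mpr (by omega)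
  -- the limit value equals 1/q
  have hval : ((g : ℝ) / (p : ℝ)) = 1 / (q : ℝ) := by
    rw [div_eq_div_iff hpR hqR0, one_mul]
    exact_mod_cast hgq
  -- divisibility criterion
  have hdvd_iff : ∀ s : ℕ, p ∣ K * s ↔ q ∣ s := by
    intro s
    have hk : g * (K / g) = K := Nat.mul_div_cancel' (Nat.gcd_dvd_right p K)
    have hcop : Nat.Coprime q (K / g) := Nat.coprime_div_gcd_div_gcd hgpos
    constructor
    · intro h
      rw [← hgq, ← hk, mul_assoc] at h
      have h3 : q ∣ (K / g) * s := (mul_dvd_mul_iff_left (by omega : g ≠ 0)).mp h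
      exact hcop.dvd_of_dvd_mul_left h3
    · rintro ⟨t, rfl⟩
      rw [← hgq, ← hk]
      exact ⟨(K / g) * t, by ring⟩
  -- condition equivalence
  have hcond : ∀ a b : ℕ, ((a + b) % p = (a % K + b % K) % p)
      ↔ (a / K + b / K) % q = 0 := by
    intro a b
    have hda := Nat.div_add_mod a K
    have hdb := Nat.div_add_mod b K
    have hab : a + b = K * (a / K + b / K) + (a % K + b % K) := by
      rw [Nat.mul_add]; omega
    constructor
    · intro h
      have hmod : K * (a / K + b / K) + (a % K + b % K) ≡ (a % K + b % K) [MOD p] := by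
        rw [← hab]; exact h
      have h2 := (Nat.modEq_iff_dvd' (Nat.le_add_left _ _)).mp hmod.symm
      have h3 : p ∣ K * (a / K + b / K) := by simpa using h2
      exact Nat.mod_eq_zero_of_dvd ((hdvd_iff _).mp h3)
    · intro h
      have h3 : p ∣ K * (a / K + b / K) :=
        (hdvd_iff _).mpr (Nat.dvd_iff_mod_eq_zero.mpr h)
      have hmod : (a % K + b % K) ≡ K * (a / K + b / K) + (a % K + b % K) [MOD p] :=
        (Nat.modEq_iff_dvd' (Nat.le_add_left _ _)).mpr (by simpa using h3)
      rw [hab]; exact hmod.symm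
  -- main eventual bounds
  have hmain : ∀ m : ℕ, n + 1 ≤ m →
      (1 / (q : ℝ) - 1 / (9 * (10 : ℝ) ^ (m - 1 - n)) ≤
        (((mDigitPairs m).filter fun ab =>
            (ab.1 + ab.2) % p = (ab.1 % 10 ^ n + ab.2 % 10 ^ n) % p).card : ℝ) /
          ((mDigitPairs m).card : ℝ)) ∧
      ((((mDigitPairs m).filter fun ab =>
            (ab.1 + ab.2) % p = (ab.1 % 10 ^ n + ab.2 % 10 ^ n) % p).card : ℝ) /
          ((mDigitPairs m).card : ℝ) ≤ 1 / (q : ℝ) + 1 / (9 * (10 : ℝ) ^ (m - 1 - n))) := by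
    intro m hm
    set L := 10 ^ (m - 1 - n) with hL
    have hLpos : 0 < L := Nat.pow_pos (by norm_num)
    have h1 : 10 ^ (m - 1) = K * L := by
      rw [hK, hL, ← pow_add]; congr 1; omega
    have h2 : 10 ^ m = K * (10 * L) := by
      rw [hK, hL, show 10 ^ n * (10 * 10 ^ (m - 1 - n)) = 10 ^ (n + (m - 1 - n) + 1) by
        rw [pow_add, pow_add]; ring]
      congr 1; omega
    set S := Finset.Ico (10 ^ (m - 1)) (10 ^ m) with hS
    have hScard : S.card = 9 * (K * L) := by
      rw [hS, Nat.card_Ico, h1, h2, show K * (10 * L) = 10 * (K * L) by ring]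
      omega
    set T := ((mDigitPairs m).filter fun ab : ℕ × ℕ =>
        (ab.1 + ab.2) % p = (ab.1 % 10 ^ n + ab.2 % 10 ^ n) % p).card with hT
    have hTsum : T = ∑ a ∈ S, K * ((Finset.Ico L (10 * L)).filter
        fun u => (a / K + u) % q = 0).card := by
      rw [hT, mDigitPairs]
      rw [Finset.filter_congr (fun ab _ => hcond ab.1 ab.2)]
      rw [aux_card_filter_product]
      refine Finset.sum_congr rfl fun a _ => ?_
      have h4 := aux_card_div K L (10 * L) hKpos (fun u => (a / K + u) % q = 0)
      rw [h1, h2]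
      exact h4
    -- bounds on T, in ℕ, multiplied by q
    have hTub : q * T ≤ 9 * (K * L) * (K * (9 * L + q)) := by
      rw [hTsum, Finset.mul_sum]
      calc ∑ a ∈ S, q * (K * ((Finset.Ico L (10 * L)).filter
              fun u => (a / K + u) % q = 0).card)
          ≤ ∑ _a ∈ S, K * (9 * L + q) := by
            refine Finset.sum_le_sum fun a _ => ?_
            have h5 := (aux_count_bounds q L (a / K) hqpos hLpos).2
            calc q * (K * ((Finset.Ico L (10 * L)).filter
                    fun u => (a / K + u) % q = 0).card)
                = K * (q * ((Finset.Ico L (10 * L)).filter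
                    fun u => (a / K + u) % q = 0).card) := by ring
              _ ≤ K * (9 * L + q) := Nat.mul_le_mul_left K h5
        _ = 9 * (K * L) * (K * (9 * L + q)) := by
            rw [Finset.sum_const, smul_eq_mul, hScard]
    have hTlb : 9 * (K * L) * (K * (9 * L)) ≤ q * T + 9 * (K * L) * (K * q) := by
      rw [hTsum, Finset.mul_sum]
      have hsum : ∑ _a ∈ S, K * (9 * L) ≤ ∑ a ∈ S, (q * (K * ((Finset.Ico L (10 * L)).filter
          fun u => (a / K + u) % q = 0).card) + K * q) := by
        refine Finset.sum_le_sum fun a _ => ?_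
        have h5 := (aux_count_bounds q L (a / K) hqpos hLpos).1
        calc K * (9 * L) ≤ K * (q * ((Finset.Ico L (10 * L)).filter
                fun u => (a / K + u) % q = 0).card + q) := Nat.mul_le_mul_left K h5
          _ = q * (K * ((Finset.Ico L (10 * L)).filter
                fun u => (a / K + u) % q = 0).card) + K * q := by ring
      rw [Finset.sum_add_distrib, Finset.sum_const, Finset.sum_const, smul_eq_mul,
        smul_eq_mul, hScard] at hsum
      exact hsum
    -- denominator
    have hden : (mDigitPairs m).card = (9 * (K * L)) * (9 * (K * L)) := by
      rw [mDigitPairs, Finset.card_product, ← hS, hScard]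
    -- now real arithmetic
    have hKR : (0 : ℝ) < K := by exact_mod_cast hKpos
    have hLR : (0 : ℝ) < L := by exact_mod_cast hLpos
    have hqR : (0 : ℝ) < q := by exact_mod_cast hqpos
    have hLcast : ((L : ℝ)) = (10 : ℝ) ^ (m - 1 - n) := by rw [hL]; push_cast; ring
    have hTubR : (q : ℝ) * T ≤ 9 * ((K : ℝ) * L) * (K * (9 * L + q)) := by exact_mod_cast hTub
    have hTlbR : 9 * ((K : ℝ) * L) * (K * (9 * L)) ≤ q * T + 9 * (K * L) * (K * q) := by
      exact_mod_cast hTlb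
    have hdenR : ((mDigitPairs m).card : ℝ) = (9 * ((K : ℝ) * L)) * (9 * ((K : ℝ) * L)) := by
      rw [hden]; push_cast; ring
    rw [mul_comm (q : ℝ) (T : ℝ)] at hTubR hTlbR
    constructor
    · rw [hdenR, ← hLcast, le_div_iff₀ (by positivity)]
      have key : (1 / (q : ℝ) - 1 / (9 * (L : ℝ))) * (9 * ((K : ℝ) * L) * (9 * ((K : ℝ) * L))) * q
          = 9 * ((K : ℝ) * L) * (K * (9 * L)) - 9 * ((K : ℝ) * L) * (K * q) := by
        field_simp
      have h6 : (1 / (q : ℝ) - 1 / (9 * (L : ℝ))) * (9 * ((K : ℝ) * L) * (9 * ((K : ℝ) * L))) * q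
          ≤ (T : ℝ) * q := by rw [key]; linarith
      exact le_of_mul_le_mul_right h6 hqR
    · rw [hdenR, ← hLcast, div_le_iff₀ (by positivity)]
      have key : (1 / (q : ℝ) + 1 / (9 * (L : ℝ))) * (9 * ((K : ℝ) * L) * (9 * ((K : ℝ) * L))) * q
          = 9 * ((K : ℝ) * L) * (K * (9 * L + q)) := by
        field_simp
      have h6 : (T : ℝ) * q
          ≤ (1 / (q : ℝ) + 1 / (9 * (L : ℝ))) * (9 * ((K : ℝ) * L) * (9 * ((K : ℝ) * L))) * q := by
        rw [key]; linarith
      exact le_of_mul_le_mul_right h6 hqR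
  -- squeeze
  rw [show ((Nat.gcd p (10 ^ n) : ℝ) / (p : ℝ)) = 1 / (q : ℝ) from hval]
  have haux : Tendsto (fun m : ℕ => 1 / (9 * (10 : ℝ) ^ (m - 1 - n))) atTop (nhds 0) := by
    have h10 : Tendsto (fun k : ℕ => ((1 : ℝ) / 10) ^ k) atTop (nhds 0) :=
      tendsto_pow_atTop_nhds_zero_of_lt_one (by norm_num) (by norm_num)
    have hsub : Tendsto (fun m : ℕ => m - 1 - n) atTop atTop :=
      (Filter.tendsto_sub_atTop_nat n).comp (Filter.tendsto_sub_atTop_nat 1)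
    have hcomp : Tendsto (fun m : ℕ => ((1 : ℝ) / 10) ^ (m - 1 - n)) atTop (nhds 0) := by
      have h11 := h10.comp hsub
      simpa [Function.comp_def] using h11
    have h12 := hcomp.const_mul ((1 : ℝ) / 9)
    rw [mul_zero] at h12
    refine h12.congr fun m => ?_
    rw [div_pow, one_pow, one_div_mul_one_div]
  have hlow : Tendsto (fun m : ℕ => 1 / (q : ℝ) - 1 / (9 * (10 : ℝ) ^ (m - 1 - n)))
      atTop (nhds (1 / (q : ℝ))) := by
    have h13 := haux.const_sub (1 / (q : ℝ))
    simpa using h13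
  have hhigh : Tendsto (fun m : ℕ => 1 / (q : ℝ) + 1 / (9 * (10 : ℝ) ^ (m - 1 - n)))
      atTop (nhds (1 / (q : ℝ))) := by
    have h13 := haux.const_add (1 / (q : ℝ))
    simpa using h13
  refine tendsto_of_tendsto_of_tendsto_of_le_of_le' hlow hhigh ?_ ?_
  · filter_upwards [eventually_ge_atTop (n + 1)] with m hm
    exact (hmain m hm).1
  · filter_upwards [eventually_ge_atTop (n + 1)] with m hm
    exact (hmain m hm).2
end

section
/- Let p ≥ 1 and n ≥ 1 be natural numbers, let g = gcd(p, 10^n) and p' = p / g, and let m > n. Then there exist natural numbers a and b, each with exactly m decimal digits (i.e., 10^{m-1} ≤ a, b < 10^m), satisfying (a + b) ≡ (a mod 10^n) + (b mod 10^n) (mod p), if and only if p' ≤ 2·(10^{m-n} − 1). -/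
lemma ood_key_dvd (p N s : ℕ) (hp : 0 < p) : p ∣ N * s ↔ p / Nat.gcd p N ∣ s := by
  set g := Nat.gcd p N with hg
  have hgpos : 0 < g := Nat.gcd_pos_of_pos_left N hp
  have hpg : g * (p / g) = p := Nat.mul_div_cancel' (Nat.gcd_dvd_left p N)
  have hNg : g * (N / g) = N := Nat.mul_div_cancel' (Nat.gcd_dvd_right p N)
  have hcop : Nat.Coprime (p / g) (N / g) := Nat.coprime_div_gcd_div_gcd hgpos
  constructor
  · intro h
    rw [← hpg, ← hNg, mul_assoc] at h
    have h2 := (mul_dvd_mul_iff_left (a := g) hgpos.ne').mp h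
    exact hcop.dvd_of_dvd_mul_left h2
  · intro h
    rw [← hpg, ← hNg, mul_assoc]
    exact mul_dvd_mul_left g (h.mul_left _)

/-- With `p' = p / gcd(p, 10^n)` and `m > n`, there exist `m`-digit numbers `a` and `b`
on which the truncated modular addition agrees with the true one iff
`p' ≤ 2·(10^(m-n) − 1)`. -/
theorem ood_accuracy_positive_threshold (p n m : ℕ) (hp : 1 ≤ p) (hn : 1 ≤ n) (hm : n < m) :
    (∃ a b : ℕ, 10 ^ (m - 1) ≤ a ∧ a < 10 ^ m ∧ 10 ^ (m - 1) ≤ b ∧ b < 10 ^ m ∧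
        (a + b) % p = (a % 10 ^ n + b % 10 ^ n) % p) ↔
      p / Nat.gcd p (10 ^ n) ≤ 2 * (10 ^ (m - n) - 1) := by
  set N := 10 ^ n with hN
  have hNpos : 0 < N := pow_pos (by norm_num) n
  set p' := p / Nat.gcd p N with hp'
  have hp'pos : 0 < p' :=
    Nat.div_pos (Nat.le_of_dvd hp (Nat.gcd_dvd_left p N)) (Nat.gcd_pos_of_pos_left N hp)
  set k := m - n with hk
  have hk1 : 1 ≤ k := by omega
  have hpow10 : (10:ℕ) ^ k = 10 * 10 ^ (k - 1) := by
    conv_lhs => rw [show k = (k-1) + 1 by omega]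
    ring
  have hm1 : 10 ^ (m - 1) = 10 ^ (k - 1) * N := by
    rw [hN, ← pow_add]; congr 1; omega
  have hmeq : 10 ^ m = 10 ^ k * N := by
    rw [hN, ← pow_add]; congr 1; omega
  constructor
  · rintro ⟨a, b, ha1, ha2, hb1, hb2, hcond⟩
    have hr : a % N + b % N ≤ a + b := add_le_add (Nat.mod_le _ _) (Nat.mod_le _ _)
    have hdvd : p ∣ (a + b) - (a % N + b % N) := (Nat.modEq_iff_dvd' hr).mp hcond.symm
    have heq : (a + b) - (a % N + b % N) = N * (a / N + b / N) := by
      have h1 := Nat.mod_add_div a N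
      have h2 := Nat.mod_add_div b N
      rw [mul_add]; omega
    rw [heq] at hdvd
    have hps : p' ∣ a / N + b / N := (ood_key_dvd p N _ hp).mp hdvd
    have haq : a / N < 10 ^ k := Nat.div_lt_of_lt_mul (by rw [mul_comm, ← hmeq]; exact ha2)
    have hbq : b / N < 10 ^ k := Nat.div_lt_of_lt_mul (by rw [mul_comm, ← hmeq]; exact hb2)
    have haq1 : 1 ≤ a / N := by
      rw [Nat.le_div_iff_mul_le hNpos, one_mul]
      calc N ≤ 10 ^ (m-1) := by
              rw [hN]; exact pow_le_pow_right₀ (by norm_num) (by omega)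
        _ ≤ a := ha1
    have hbq1 : 1 ≤ b / N := by
      rw [Nat.le_div_iff_mul_le hNpos, one_mul]
      calc N ≤ 10 ^ (m-1) := by
              rw [hN]; exact pow_le_pow_right₀ (by norm_num) (by omega)
        _ ≤ b := hb1
    have := Nat.le_of_dvd (by omega) hps
    omega
  · intro hle
    set L := 2 * 10 ^ (k - 1) with hL
    set s := p' * ((L + p' - 1) / p') with hs
    have hLpos : 0 < L := by positivity
    have hsL : L ≤ s := by
      have h1 := Nat.mod_add_div (L + p' - 1) p'
      have h2 := Nat.mod_lt (L + p' - 1) hp'pos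
      omega
    have hsR : s ≤ 2 * (10 ^ k - 1) := by
      by_cases hcase : L ≤ p'
      · have hdiv : (L + p' - 1) / p' = 1 := by
          apply Nat.div_eq_of_lt_le <;> omega
        rw [hs, hdiv, mul_one]; exact hle
      · have h1 : p' * ((L + p' - 1) / p') ≤ L + p' - 1 := by
          rw [mul_comm]; exact Nat.div_mul_le_self _ _
        have : (10:ℕ)^k = 10 * 10^(k-1) := hpow10
        omega
    have hp'dvd : p' ∣ s := Dvd.intro _ rfl
    -- split s into two digits-range summands
    have hsplit : ∃ q₁ q₂ : ℕ, 10 ^ (k-1) ≤ q₁ ∧ q₁ < 10 ^ k ∧ 10 ^ (k-1) ≤ q₂ ∧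
        q₂ < 10 ^ k ∧ q₁ + q₂ = s := by
      refine ⟨s - min (s - 10 ^ (k-1)) (10 ^ k - 1), min (s - 10 ^ (k-1)) (10 ^ k - 1), ?_, ?_, ?_, ?_, ?_⟩ <;>
        · have h10 : (10:ℕ)^k = 10 * 10^(k-1) := hpow10
          have h1 : (0:ℕ) < 10 ^ (k-1) := by positivity
          omega
    obtain ⟨q₁, q₂, hq1l, hq1u, hq2l, hq2u, hqs⟩ := hsplit
    refine ⟨q₁ * N, q₂ * N, ?_, ?_, ?_, ?_, ?_⟩
    · rw [hm1]; exact Nat.mul_le_mul_right N hq1l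
    · rw [hmeq]; exact (Nat.mul_lt_mul_right hNpos).mpr hq1u
    · rw [hm1]; exact Nat.mul_le_mul_right N hq2l
    · rw [hmeq]; exact (Nat.mul_lt_mul_right hNpos).mpr hq2u
    · have hmod1 : q₁ * N % N = 0 := Nat.mul_mod_left _ _
      have hmod2 : q₂ * N % N = 0 := Nat.mul_mod_left _ _
      rw [hmod1, hmod2]
      have hpd : p ∣ q₁ * N + q₂ * N := by
        have : q₁ * N + q₂ * N = N * s := by rw [← hqs]; ring
        rw [this]
        exact (ood_key_dvd p N s hp).mpr hp'dvd
      obtain ⟨t, ht⟩ := hpd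
      simp [ht, Nat.mul_mod_right]
end

section
/- Let n ≥ 1 and let a, b be natural numbers with a < 10^n and b < 10^n, with decimal digits a_i = ⌊a/10^i⌋ mod 10 and b_j = ⌊b/10^j⌋ mod 10 (which vanish for indices ≥ n). Define the raw sums d_k = Σ_{i+j=k} a_i·b_j and run the carry recursion κ_0 = 0, c_k = (d_k + κ_k) mod 10, κ_{k+1} = ⌊(d_k + κ_k)/10⌋. Then κ_{2n} = 0 and for every k ≥ 0, c_k = ⌊(a·b)/10^k⌋ mod 10; that is, the recursion outputs exactly the decimal digits of the product a·b. -/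
/-- The carry-normalization recursion: `κ 0 = 0` and `κ (k+1) = (d k + κ k) / 10`. -/
def normCarry (d : ℕ → ℕ) : ℕ → ℕ
  | 0 => 0
  | k + 1 => (d k + normCarry d k) / 10

/-- The raw sum at position `k` of the product of `a` and `b`:
`d k = Σ_{i+j=k} (i-th digit of a)·(j-th digit of b)`. -/
def rawSum (a b : ℕ) (k : ℕ) : ℕ :=
  ∑ i ∈ Finset.range (k + 1), a / 10 ^ i % 10 * (b / 10 ^ (k - i) % 10)

lemma digitSum (x m : ℕ) : ∑ i ∈ Finset.range m, x / 10 ^ i % 10 * 10 ^ i = x % 10 ^ m := by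
  induction m with
  | zero => simp [Nat.mod_one]
  | succ m ih => rw [Finset.sum_range_succ, ih, pow_succ, Nat.mod_mul]; ring

lemma rawSumTotal {n : ℕ} (a b : ℕ) (ha : a < 10 ^ n) (hb : b < 10 ^ n)
    {m : ℕ} (hm : 2 * n ≤ m) :
    ∑ k ∈ Finset.range m, rawSum a b k * 10 ^ k = a * b := by
  have h : ∀ k, rawSum a b k * 10 ^ k
      = ∑ i ∈ Finset.range (k + 1),
          (a / 10 ^ i % 10 * 10 ^ i) * (b / 10 ^ (k - i) % 10 * 10 ^ (k - i)) := by
    intro k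
    rw [rawSum, Finset.sum_mul]
    refine Finset.sum_congr rfl fun i hi => ?_
    have : i + (k - i) = k := Nat.add_sub_cancel' (Nat.lt_succ_iff.mp (Finset.mem_range.mp hi))
    rw [← this, pow_add]; simp only [Nat.add_sub_cancel_left]; ring
  simp only [h]
  rw [Finset.sum_range_diag_flip m
    (fun i j => (a / 10 ^ i % 10 * 10 ^ i) * (b / 10 ^ j % 10 * 10 ^ j))]
  have h2 : ∀ i ∈ Finset.range m,
      (∑ j ∈ Finset.range (m - i), (a / 10 ^ i % 10 * 10 ^ i) * (b / 10 ^ j % 10 * 10 ^ j))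
      = (a / 10 ^ i % 10 * 10 ^ i) * b := by
    intro i hi
    rw [← Finset.mul_sum, digitSum]
    rcases le_or_gt n i with hni | hni
    · have : a / 10 ^ i = 0 :=
        Nat.div_eq_of_lt (ha.trans_le (Nat.pow_le_pow_right (by norm_num) hni))
      simp [this]
    · have hbn : b % 10 ^ (m - i) = b := by
        apply Nat.mod_eq_of_lt
        exact hb.trans_le (Nat.pow_le_pow_right (by norm_num) (by omega))
      rw [hbn]
  rw [Finset.sum_congr rfl h2, ← Finset.sum_mul]
  have := digitSum a m
  rw [this, Nat.mod_eq_of_lt (ha.trans_le (Nat.pow_le_pow_right (by norm_num) (by omega)))]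

lemma carryEq (d : ℕ → ℕ) (k : ℕ) :
    normCarry d k = (∑ j ∈ Finset.range k, d j * 10 ^ j) / 10 ^ k := by
  induction k with
  | zero => simp [normCarry]
  | succ k ih =>
    rw [normCarry, ih, Finset.sum_range_succ, pow_succ,
      ← Nat.div_div_eq_div_mul, Nat.add_mul_div_right _ _ (pow_pos (by norm_num) k), Nat.add_comm]

/-- Running the carry recursion on the raw convolution sums of the digits of `a` and `b`
(`a, b < 10^n`) terminates with zero carry at position `2n` and outputs exactly the
decimal digits of the product `a·b`. -/
theorem multiplication_carry_recursion_correct (n : ℕ) (hn : 1 ≤ n) (a b : ℕ)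
    (ha : a < 10 ^ n) (hb : b < 10 ^ n) :
    normCarry (rawSum a b) (2 * n) = 0 ∧
    ∀ k, (rawSum a b k + normCarry (rawSum a b) k) % 10 = a * b / 10 ^ k % 10 := by
  constructor
  · rw [carryEq, rawSumTotal a b ha hb le_rfl]
    apply Nat.div_eq_of_lt
    calc a * b < 10 ^ n * 10 ^ n := Nat.mul_lt_mul_of_lt_of_lt ha hb
    _ = 10 ^ (2 * n) := by rw [← pow_add]; ring_nf
  · intro k
    set m := max (k + 1) (2 * n) with hm
    have htot : ∑ j ∈ Finset.range m, rawSum a b j * 10 ^ j = a * b :=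
      rawSumTotal a b ha hb (le_max_right _ _)
    have hsplit : a * b = (∑ j ∈ Finset.range (k + 1), rawSum a b j * 10 ^ j)
        + ∑ j ∈ Finset.Ico (k + 1) m, rawSum a b j * 10 ^ j := by
      rw [← htot]
      simp only [Finset.range_eq_Ico]
      exact (Finset.sum_Ico_consecutive _ (Nat.zero_le _) (le_max_left _ _)).symm
    obtain ⟨T, hT⟩ : 10 ^ (k + 1) ∣ ∑ j ∈ Finset.Ico (k + 1) m, rawSum a b j * 10 ^ j := by
      apply Finset.dvd_sum
      intro j hj
      exact Dvd.dvd.mul_left (pow_dvd_pow 10 (Finset.mem_Ico.mp hj).1) _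
    rw [carryEq]
    have hk : (0:ℕ) < 10 ^ k := pow_pos (by norm_num) k
    have key : rawSum a b k + (∑ j ∈ Finset.range k, rawSum a b j * 10 ^ j) / 10 ^ k
        = (∑ j ∈ Finset.range (k + 1), rawSum a b j * 10 ^ j) / 10 ^ k := by
      rw [Finset.sum_range_succ, Nat.add_mul_div_right _ _ hk, Nat.add_comm]
    have hT' : (10:ℕ) ^ (k + 1) * T = 10 * T * 10 ^ k := by rw [pow_succ]; ring
    rw [key, hsplit, hT, hT', Nat.add_mul_div_right _ _ hk, Nat.add_mul_mod_self_left]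
end

section
/- Let p ≥ 1 and n ≥ 1 be natural numbers, let g = gcd(p, 10^n) and p' = p / g. Let a = A·10^n + a₀ and b = B·10^n + b₀ with a₀ < 10^n and b₀ < 10^n. Then a·b ≡ a₀·b₀ (mod p) if and only if p' divides A·B·10^n + A·b₀ + B·a₀. -/
/-- With `g = gcd(p, 10^n)`, `p' = p / g`, and operands split into high and low parts
`a = A·10^n + a₀`, `b = B·10^n + b₀` (`a₀, b₀ < 10^n`), the truncated modular
multiplication is correct, i.e. `a·b ≡ a₀·b₀ (mod p)`, iff
`p' ∣ A·B·10^n + A·b₀ + B·a₀`. -/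
theorem truncated_modular_multiplication_correct_iff (p n : ℕ) (hp : 1 ≤ p) (hn : 1 ≤ n)
    (A B a₀ b₀ : ℕ) (ha₀ : a₀ < 10 ^ n) (hb₀ : b₀ < 10 ^ n) :
    (A * 10 ^ n + a₀) * (B * 10 ^ n + b₀) % p = a₀ * b₀ % p ↔
      p / Nat.gcd p (10 ^ n) ∣ A * B * 10 ^ n + A * b₀ + B * a₀ := by
  set g := Nat.gcd p (10 ^ n) with hg
  have hg0 : 0 < g := Nat.gcd_pos_of_pos_left _ hp
  have hgp : g ∣ p := Nat.gcd_dvd_left _ _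
  have hgt : g ∣ 10 ^ n := Nat.gcd_dvd_right _ _
  have hle : a₀ * b₀ ≤ (A * 10 ^ n + a₀) * (B * 10 ^ n + b₀) :=
    Nat.mul_le_mul (Nat.le_add_left _ _) (Nat.le_add_left _ _)
  have key : (A * 10 ^ n + a₀) * (B * 10 ^ n + b₀) - a₀ * b₀ =
      10 ^ n * (A * B * 10 ^ n + A * b₀ + B * a₀) := by
    have : (A * 10 ^ n + a₀) * (B * 10 ^ n + b₀) =
        10 ^ n * (A * B * 10 ^ n + A * b₀ + B * a₀) + a₀ * b₀ := by ring
    omega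
  rw [eq_comm]
  rw [show (a₀ * b₀ % p = (A * 10 ^ n + a₀) * (B * 10 ^ n + b₀) % p) =
      (a₀ * b₀ ≡ (A * 10 ^ n + a₀) * (B * 10 ^ n + b₀) [MOD p]) from rfl]
  rw [Nat.modEq_iff_dvd' hle, key]
  set X := A * B * 10 ^ n + A * b₀ + B * a₀
  obtain ⟨p', hp'⟩ := hgp
  obtain ⟨q, hq⟩ := hgt
  have hpd : p / g = p' := by rw [hp', Nat.mul_div_cancel_left _ hg0]
  have hqd : 10 ^ n / g = q := by rw [hq, Nat.mul_div_cancel_left _ hg0]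
  have hcop : Nat.Coprime p' q := by
    rw [← hpd, ← hqd]; exact Nat.coprime_div_gcd_div_gcd hg0
  rw [hpd]
  constructor
  · intro h
    have h2 : p' ∣ q * X := (Nat.mul_dvd_mul_iff_left hg0).mp
      (by rw [← mul_assoc, ← hq, ← hp']; exact h)
    exact hcop.dvd_of_dvd_mul_left h2
  · intro h
    rw [hp', hq, mul_assoc]
    exact Nat.mul_dvd_mul_left g (Dvd.dvd.mul_left h q)
end
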